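/- arXiv:2412.05645 — 2 statements merged into one kernel-verified Lean document; each statement's English description precedes it below -/
import Mathlib

section
/- Let ψ : [0, 1/2] → ℝ be continuous and define T_ψ : [0,1] → ℝ by T_ψ(λ) := ∑_{k=0}^∞ 2^{−k}·ψ(d_ℤ(2^k·λ)). Then T_ψ is continuous, and f = T_ψ is the unique continuous function f : [0,1] → ℝ satisfying f(0) = f(1) together with the functional equation: f(λ) = (1/2)·f(2λ) + ψ(λ) for λ ∈ [0, 1/2], and f(λ) = (1/2)·f(2λ − 1) + ψ(1 − λ) for λ ∈ (1/2, 1]. -/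
/-!
`dZ` is the norm on `ℝ ⧸ ℤ`, so `ψ ∘ dZ` is continuous, bounded and `1`-periodic, and it
agrees with `ψ(λ)` on `[0, 1/2]` and with `ψ(1 - λ)` on `(1/2, 1]`. Splitting off the `k = 0`
term of the series gives `T λ = ψ (dZ λ) + T (2λ) / 2`, which is the functional equation once
periodicity turns `T (2λ)` into `T (2λ - 1)` on the right half. For uniqueness, the difference
`h` of two continuous solutions satisfies `|h λ| = |h μ| / 2` for some `μ ∈ [0, 1]`, so at a
maximum point of `|h|` the maximum is `0`.
-/

noncomputable section

/-- The distance of a real number to the set of integers. -/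
noncomputable def dZ (x : ℝ) : ℝ := ⨅ k : ℤ, |x - (k : ℝ)|

open Set

section DistToInt

lemma dZ_eq_abs_sub_round (x : ℝ) : dZ x = |x - round x| :=
  le_antisymm (ciInf_le ⟨0, by rintro _ ⟨k, rfl⟩; exact abs_nonneg _⟩ (round x))
    (le_ciInf (round_le x))

lemma dZ_eq_norm_addCircle (x : ℝ) : dZ x = ‖(x : AddCircle (1 : ℝ))‖ := by
  simp [AddCircle.norm_eq, dZ_eq_abs_sub_round]

lemma continuous_dZ : Continuous dZ := by
  simp only [funext dZ_eq_norm_addCircle]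
  fun_prop

lemma dZ_mem_Icc (x : ℝ) : dZ x ∈ Icc (0 : ℝ) (1 / 2) :=
  ⟨(dZ_eq_abs_sub_round x).symm ▸ abs_nonneg _, (dZ_eq_abs_sub_round x).symm ▸ abs_sub_round x⟩

lemma dZ_periodic : Function.Periodic dZ 1 := fun x => by
  simp [dZ_eq_norm_addCircle]

lemma dZ_of_abs_le {x : ℝ} (hx : |x| ≤ 1 / 2) : dZ x = |x| := by
  rw [dZ_eq_norm_addCircle, AddCircle.norm_coe_eq_abs_iff _ one_ne_zero]
  simpa using hx

lemma dZ_of_mem_Icc {x : ℝ} (hx : x ∈ Icc (0 : ℝ) (1 / 2)) : dZ x = x := by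
  rw [dZ_of_abs_le (by rw [abs_of_nonneg hx.1]; exact hx.2), abs_of_nonneg hx.1]

lemma dZ_of_mem_Ioc {x : ℝ} (hx : x ∈ Ioc (1 / 2 : ℝ) 1) : dZ x = 1 - x := by
  have h : |x - 1| = 1 - x := by rw [abs_of_nonpos (by linarith [hx.2])]; ring
  rw [← dZ_periodic.sub_eq, dZ_of_abs_le (by rw [h]; linarith [hx.1]), h]

end DistToInt

def takagiSum (g : ℝ → ℝ) (x : ℝ) : ℝ := ∑' k : ℕ, (1 / 2 : ℝ) ^ k * g (2 ^ k * x)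

section TakagiSum

variable {g : ℝ → ℝ} {C : ℝ}

lemma norm_takagiSum_term_le (hC : ∀ x, |g x| ≤ C) (x : ℝ) (k : ℕ) :
    ‖(1 / 2 : ℝ) ^ k * g (2 ^ k * x)‖ ≤ C * (1 / 2) ^ k := by
  rw [norm_mul, norm_pow, Real.norm_eq_abs, Real.norm_eq_abs,
    abs_of_pos (one_half_pos : (0 : ℝ) < 1 / 2), mul_comm]
  gcongr
  exact hC _

lemma continuous_takagiSum (hg : Continuous g) (hC : ∀ x, |g x| ≤ C) :
    Continuous (takagiSum g) :=
  continuous_tsum (fun _ => by fun_prop) (summable_geometric_two.mul_left C)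
    fun k x => norm_takagiSum_term_le hC x k

lemma takagiSum_eq_add (hC : ∀ x, |g x| ≤ C) (x : ℝ) :
    takagiSum g x = g x + 2⁻¹ * takagiSum g (2 * x) := by
  have hs := (summable_geometric_two.mul_left C).of_norm_bounded (norm_takagiSum_term_le hC x)
  rw [takagiSum, hs.tsum_eq_zero_add, takagiSum, ← tsum_mul_left]
  congr 1
  · simp
  · refine tsum_congr fun k => ?_
    rw [show (2 : ℝ) ^ (k + 1) * x = 2 ^ k * (2 * x) by ring]
    ring

lemma Function.Periodic.takagiSum (hg : Function.Periodic g 1) :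
    Function.Periodic (takagiSum g) 1 := fun x => by
  refine tsum_congr fun k => ?_
  have h := hg.nat_mul (2 ^ k) (2 ^ k * x)
  push_cast at h
  rw [mul_one] at h
  rw [mul_add, mul_one, h]

end TakagiSum

def IsDyadicSolution (ψ f : ℝ → ℝ) : Prop :=
  (∀ l ∈ Icc (0 : ℝ) (1 / 2), f l = 2⁻¹ * f (2 * l) + ψ l) ∧
    (∀ l ∈ Ioc (1 / 2 : ℝ) 1, f l = 2⁻¹ * f (2 * l - 1) + ψ (1 - l))

lemma isDyadicSolution_takagiSum {ψ : ℝ → ℝ} {C : ℝ} (hC : ∀ x, |(ψ ∘ dZ) x| ≤ C) :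
    IsDyadicSolution ψ (takagiSum (ψ ∘ dZ)) := by
  constructor
  · intro l hl
    rw [takagiSum_eq_add hC, Function.comp_apply, dZ_of_mem_Icc hl, add_comm]
  · intro l hl
    rw [takagiSum_eq_add hC, Function.comp_apply, dZ_of_mem_Ioc hl, add_comm,
      ← (dZ_periodic.comp ψ).takagiSum.sub_eq]

lemma eqOn_zero_of_abs_le_mul {s : Set ℝ} {h : ℝ → ℝ} {c : ℝ} (hs : IsCompact s)
    (hh : ContinuousOn h s) (hc : c < 1) (H : ∀ x ∈ s, ∃ y ∈ s, |h x| ≤ c * |h y|) :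
    EqOn h 0 s := by
  intro x hx
  obtain ⟨x₀, hx₀, hmax⟩ := hs.exists_isMaxOn ⟨x, hx⟩ hh.abs
  obtain ⟨y, hy, hxy⟩ := H x₀ hx₀
  have hyx₀ : |h y| ≤ |h x₀| := hmax hy
  have hzero : |h x₀| = 0 := by
    rcases le_or_gt c 0 with hc0 | hc0
    · nlinarith [abs_nonneg (h x₀), abs_nonneg (h y)]
    · nlinarith [abs_nonneg (h x₀), mul_le_mul_of_nonneg_left hyx₀ hc0.le]
  exact abs_nonpos_iff.mp (hzero ▸ hmax hx)

lemma IsDyadicSolution.eqOn {ψ f g : ℝ → ℝ} (hf : IsDyadicSolution ψ f)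
    (hg : IsDyadicSolution ψ g) (hfc : ContinuousOn f (Icc 0 1)) (hgc : ContinuousOn g (Icc 0 1)) :
    EqOn f g (Icc 0 1) := by
  refine fun x hx => sub_eq_zero.mp <|
    eqOn_zero_of_abs_le_mul isCompact_Icc (hfc.sub hgc) (by norm_num : (2⁻¹ : ℝ) < 1) ?_ hx
  intro l hl
  rcases le_or_gt l (1 / 2) with hle | hgt
  · refine ⟨2 * l, ⟨by linarith [hl.1], by linarith⟩, le_of_eq ?_⟩
    have e : (f - g) l = 2⁻¹ * (f - g) (2 * l) := by
      rw [Pi.sub_apply, Pi.sub_apply, hf.1 l ⟨hl.1, hle⟩, hg.1 l ⟨hl.1, hle⟩]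
      ring
    rw [e, abs_mul, abs_of_pos (by norm_num : (0 : ℝ) < 2⁻¹)]
  · refine ⟨2 * l - 1, ⟨by linarith, by linarith [hl.2]⟩, le_of_eq ?_⟩
    have e : (f - g) l = 2⁻¹ * (f - g) (2 * l - 1) := by
      rw [Pi.sub_apply, Pi.sub_apply, hf.2 l ⟨hgt, hl.2⟩, hg.2 l ⟨hgt, hl.2⟩]
      ring
    rw [e, abs_mul, abs_of_pos (by norm_num : (0 : ℝ) < 2⁻¹)]

/-- the Takagi-type function `T_ψ` is continuous and is the unique continuous
solution with `f(0)=f(1)` of the dyadic functional equation. -/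
theorem stmt3 (ψ : ℝ → ℝ) (hc : ContinuousOn ψ (Set.Icc (0 : ℝ) (1 / 2)))
    (T : ℝ → ℝ) (hT : ∀ l, T l = ∑' k : ℕ, (1 / 2 : ℝ) ^ k * ψ (dZ (2 ^ k * l))) :
    (ContinuousOn T (Set.Icc (0 : ℝ) 1) ∧ T 0 = T 1 ∧
      (∀ l ∈ Set.Icc (0 : ℝ) (1 / 2), T l = 2⁻¹ * T (2 * l) + ψ l) ∧
      (∀ l ∈ Set.Ioc (1 / 2 : ℝ) 1, T l = 2⁻¹ * T (2 * l - 1) + ψ (1 - l))) ∧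
    (∀ f : ℝ → ℝ, ContinuousOn f (Set.Icc (0 : ℝ) 1) → f 0 = f 1 →
      (∀ l ∈ Set.Icc (0 : ℝ) (1 / 2), f l = 2⁻¹ * f (2 * l) + ψ l) →
      (∀ l ∈ Set.Ioc (1 / 2 : ℝ) 1, f l = 2⁻¹ * f (2 * l - 1) + ψ (1 - l)) →
      Set.EqOn f T (Set.Icc (0 : ℝ) 1)) := by
  obtain rfl : T = takagiSum (ψ ∘ dZ) := funext hT
  obtain ⟨C, hC⟩ := isCompact_Icc.exists_bound_of_continuousOn hc
  have hbound : ∀ x, |(ψ ∘ dZ) x| ≤ C := fun x => hC _ (dZ_mem_Icc x)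
  have hcont : Continuous (takagiSum (ψ ∘ dZ)) :=
    continuous_takagiSum (hc.comp_continuous continuous_dZ dZ_mem_Icc) hbound
  have hsol := isDyadicSolution_takagiSum hbound
  have hends : takagiSum (ψ ∘ dZ) 0 = takagiSum (ψ ∘ dZ) 1 := by
    simpa using ((dZ_periodic.comp ψ).takagiSum 0).symm
  refine ⟨⟨hcont.continuousOn, hends, hsol⟩, fun f hf _ hf₁ hf₂ => ?_⟩
  exact IsDyadicSolution.eqOn ⟨hf₁, hf₂⟩ hsol hf hcont.continuousOn
end
end

section
/- Let n ≥ 3 be an odd integer, let m ∈ ℤ be coprime to n, and let ℓ := φ(n)/2, where φ denotes Euler's totient function. Then for all integers k ≥ 0, d_ℤ(m/n) = d_ℤ(2^{kℓ}·(m/n)). Consequently, the sequence (d_ℤ(2^k·(m/n)))_{k≥0} is ℓ-periodic: d_ℤ(2^{k+ℓ}·(m/n)) = d_ℤ(2^k·(m/n)) for all k ≥ 0. -/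
/-! Since `2 ^ ℓ ≡ ±1 (mod n)`, multiplying `m / n` by `2 ^ ℓ` changes it only by an integer
and possibly a sign, and `d_ℤ` is invariant under both.

The congruence holds for every unit `u` modulo an odd `n`. If `n = p ^ k`, then `u ^ ℓ` is a
square root of `1` modulo `p ^ k`, hence `±1` because `p` is odd and cannot divide both
`u ^ ℓ - 1` and `u ^ ℓ + 1`. Otherwise `n = a b` with coprime `a, b > 2`; both totients are even,
so the exponent `lcm (λ a) (λ b)` of `(ℤ/n)ˣ` divides `φ(a) φ(b) / 2 = ℓ` and `u ^ ℓ = 1`. -/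

noncomputable section

open Nat ArithmeticFunction

lemma dZ_add_intCast (x : ℝ) (c : ℤ) : dZ (x + c) = dZ x := by
  have hs : Function.Surjective (fun k : ℤ => k + c) := fun k => ⟨k - c, by ring⟩
  calc dZ (x + c) = ⨅ k : ℤ, |x + c - ((k + c : ℤ) : ℝ)| :=
        (hs.iInf_comp fun j : ℤ => |x + c - (j : ℝ)|).symm
    _ = dZ x := iInf_congr fun k => by push_cast; ring_nf

lemma dZ_neg (x : ℝ) : dZ (-x) = dZ x := by
  calc dZ (-x) = ⨅ k : ℤ, |-x - ((-k : ℤ) : ℝ)| :=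
        (neg_surjective.iInf_comp fun j : ℤ => |-x - (j : ℝ)|).symm
    _ = dZ x := iInf_congr fun k => by rw [Int.cast_neg, ← abs_neg]; ring_nf

lemma dZ_intCast_div_eq_of_eq_or_eq_neg {n : ℕ} {a b : ℤ}
    (h : (a : ZMod n) = b ∨ (a : ZMod n) = -b) : dZ (a / n) = dZ (b / n) := by
  rcases eq_or_ne n 0 with rfl | hn
  · simp
  have hn' : (n : ℝ) ≠ 0 := Nat.cast_ne_zero.mpr hn
  rcases h with h | h
  · obtain ⟨t, ht⟩ := (ZMod.intCast_eq_intCast_iff_dvd_sub b a n).mp h.symm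
    have : (a : ℝ) / n = b / n + t := by
      rw [show a = b + n * t by linarith]; push_cast; field_simp
    rw [this, dZ_add_intCast]
  · rw [← Int.cast_neg] at h
    obtain ⟨t, ht⟩ := (ZMod.intCast_eq_intCast_iff_dvd_sub (-b) a n).mp h.symm
    have : (a : ℝ) / n = -(b / n) + t := by
      rw [show a = -b + n * t by linarith]; push_cast; field_simp
    rw [this, dZ_add_intCast, dZ_neg]

lemma ZMod.eq_one_or_eq_neg_one_of_sq_eq_one {p k : ℕ} (hp : p.Prime) (hp2 : p ≠ 2)
    {x : ZMod (p ^ k)} (hx : x ^ 2 = 1) : x = 1 ∨ x = -1 := by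
  obtain ⟨a, rfl⟩ := ZMod.intCast_surjective x
  have hdvd : (p : ℤ) ^ k ∣ (a - 1) * (a + 1) := by
    rw [← sub_eq_zero] at hx
    exact_mod_cast (ZMod.intCast_zmod_eq_zero_iff_dvd _ _).mp (by push_cast; linear_combination hx)
  have hpZ : Prime (p : ℤ) := Nat.prime_iff_prime_int.mp hp
  have not_both : ¬ ((p : ℤ) ∣ a - 1 ∧ (p : ℤ) ∣ a + 1) := by
    rintro ⟨h₁, h₂⟩
    have : p ∣ 2 := by exact_mod_cast (by simpa using dvd_sub h₂ h₁ : (p : ℤ) ∣ 2)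
    exact hp2 ((Nat.prime_dvd_prime_iff_eq hp Nat.prime_two).mp this)
  rcases not_and_or.mp not_both with h | h
  · right
    have hk : (p : ℤ) ^ k ∣ a + 1 :=
      (((hpZ.coprime_iff_not_dvd).mpr h).pow_left (m := k)).dvd_of_dvd_mul_left hdvd
    exact_mod_cast ((ZMod.intCast_eq_intCast_iff_dvd_sub (-1) a _).mpr (by simpa using hk)).symm
  · left
    have hk : (p : ℤ) ^ k ∣ a - 1 :=
      (((hpZ.coprime_iff_not_dvd).mpr h).pow_left (m := k)).dvd_of_dvd_mul_right hdvd
    exact_mod_cast ((ZMod.intCast_eq_intCast_iff_dvd_sub 1 a _).mpr (by simpa using hk)).symm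

lemma carmichael_mul_dvd_totient_div_two {a b : ℕ} (h : a.Coprime b) (ha : 2 < a) (hb : 2 < b) :
    carmichael (a * b) ∣ φ (a * b) / 2 := by
  obtain ⟨c, hc⟩ := totient_even ha
  obtain ⟨d, hd⟩ := totient_even hb
  rw [carmichael_mul h, totient_mul h]
  refine Nat.lcm_dvd ((carmichael_dvd_totient a).trans ⟨d, ?_⟩)
    ((carmichael_dvd_totient b).trans ⟨c, ?_⟩)
  · exact Nat.div_eq_of_eq_mul_left two_pos (by rw [hd]; ring)
  · exact Nat.div_eq_of_eq_mul_left two_pos (by rw [hc]; ring)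

theorem ZMod.pow_totient_div_two_eq_one_or_eq_neg_one {n : ℕ} (hn : Odd n) (u : (ZMod n)ˣ) :
    (u : ZMod n) ^ (φ n / 2) = 1 ∨ (u : ZMod n) ^ (φ n / 2) = -1 := by
  induction n using Nat.recOnPosPrimePosCoprime with
  | prime_pow p k hp hk =>
    have hp2 : p ≠ 2 := (hn.of_dvd_nat (dvd_pow_self p hk.ne')).ne_two_of_dvd_nat dvd_rfl
    have h2 : 2 < p ^ k := lt_of_lt_of_le (hp.two_le.lt_of_ne' hp2) (Nat.le_self_pow hk.ne' p)
    refine ZMod.eq_one_or_eq_neg_one_of_sq_eq_one hp hp2 ?_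
    rw [← pow_mul, Nat.div_mul_cancel (even_iff_two_dvd.mp (totient_even h2)),
      ← Units.val_pow_eq_pow_val, ZMod.pow_totient, Units.val_one]
  | zero => exact absurd hn (by decide)
  | one => simp
  | coprime a b ha hb hab _ _ =>
    left
    have hodd_a : Odd a := hn.of_dvd_nat (dvd_mul_right a b)
    have hodd_b : Odd b := hn.of_dvd_nat (dvd_mul_left b a)
    obtain ⟨c, hc⟩ := carmichael_mul_dvd_totient_div_two hab
      (by obtain ⟨i, rfl⟩ := hodd_a; omega) (by obtain ⟨i, rfl⟩ := hodd_b; omega)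
    rw [hc, ← Units.val_pow_eq_pow_val, pow_mul, pow_carmichael, one_pow, Units.val_one]

theorem stmt9_general (n : ℕ) (hodd : Odd n) (m : ℤ) :
    (∀ k : ℕ, dZ ((m : ℝ) / (n : ℝ)) =
      dZ (2 ^ (k * (Nat.totient n / 2)) * ((m : ℝ) / (n : ℝ)))) ∧
    (∀ k : ℕ, dZ (2 ^ (k + Nat.totient n / 2) * ((m : ℝ) / (n : ℝ))) =
      dZ (2 ^ k * ((m : ℝ) / (n : ℝ)))) := by
  set L := φ n / 2
  have hL : (2 : ZMod n) ^ L = 1 ∨ (2 : ZMod n) ^ L = -1 := by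
    simpa using ZMod.pow_totient_div_two_eq_one_or_eq_neg_one hodd
      (ZMod.unitOfCoprime 2 (Nat.coprime_two_left.mpr hodd))
  have cast_mul (j : ℕ) (x : ℤ) : (2 : ℝ) ^ j * (x / n) = ((2 ^ j * x : ℤ) : ℝ) / n := by
    push_cast; ring
  refine ⟨fun k => ?_, fun k => ?_⟩
  · have hkL : (2 : ZMod n) ^ (k * L) = 1 ∨ (2 : ZMod n) ^ (k * L) = -1 := by
      rw [mul_comm, pow_mul]
      rcases hL with h | h <;> rw [h]
      · simp
      · exact neg_one_pow_eq_or _ k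
    rw [cast_mul]
    refine (dZ_intCast_div_eq_of_eq_or_eq_neg ?_).symm
    push_cast
    rcases hkL with h | h <;> simp [h]
  · rw [cast_mul, cast_mul]
    refine dZ_intCast_div_eq_of_eq_or_eq_neg ?_
    push_cast
    rcases hL with h | h <;> simp [pow_add, h, mul_comm]

/-- for odd `n ≥ 3`, `m` coprime to `n` and `ℓ = φ(n)/2`, one has
`d_ℤ(m/n) = d_ℤ(2^{kℓ} m/n)` for all `k ≥ 0`; consequently the sequence
`(d_ℤ(2^k m/n))_{k ≥ 0}` is `ℓ`-periodic. -/
theorem stmt9 (n : ℕ) (hn : 3 ≤ n) (hodd : Odd n) (m : ℤ) (hco : IsCoprime m (n : ℤ)) :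
    (∀ k : ℕ, dZ ((m : ℝ) / (n : ℝ)) =
      dZ (2 ^ (k * (Nat.totient n / 2)) * ((m : ℝ) / (n : ℝ)))) ∧
    (∀ k : ℕ, dZ (2 ^ (k + Nat.totient n / 2) * ((m : ℝ) / (n : ℝ))) =
      dZ (2 ^ k * ((m : ℝ) / (n : ℝ)))) :=
  stmt9_general n hodd m
end
end
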